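/- For an integer μ ≥ 1, let Q_μ be the 103×103 real matrix with rows and columns indexed by x₁, x₂, x₃ and x₄, …, x₁₀₃, whose only nonzero entries are Q_μ(x₂,x₁) = 1 and, for each i with 4 ≤ i ≤ 103, Q_μ(x_i,x₃) = 2^{−μ} and Q_μ(x_i,x₂) = 1 − 2^{−μ}. Then I − Q_μ is invertible and the average of the entries of m = (I − Q_μ)⁻¹·𝟙 over all 103 transient states equals (304 − 100·2^{−μ})/103. This quantity is strictly increasing in μ and equals 254/103 for μ = 1; hence the a-scalability 254/(304 − 100·2^{−μ}) is strictly less than 1 for every μ ≥ 2. (Q_μ is the transient submatrix of the (1+μ) elitist EA of the paper's second counterexample with ε = 0, showing that increasing the population size increases the average expected number of generations to find the optimum.) -/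

import Mathlib

/-!
Every transition of `Q_μ` goes from a state to one of smaller index, so `Q_μ` is strictly
lower triangular and `I - Q_μ` is unitriangular, hence invertible. Back substitution in
`m = Q_μ m + 𝟙` gives `m(x₁) = m(x₃) = 1`, `m(x₂) = 2` and
`m(xᵢ) = 1 + 2⁻ᵘ·1 + (1 - 2⁻ᵘ)·2 = 3 - 2⁻ᵘ` for `i ≥ 4`, whose total is `304 - 100·2⁻ᵘ`.
Monotonicity and the scalability bound only use that `2⁻ᵘ` is strictly decreasing.
-/

open Matrix

/-- The transient transition submatrix of the `(1+μ)` elitist EA of the paper's second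
counterexample (with `ε = 0`): states `x₁,x₂,x₃` are indexed by `0,1,2` and
`x₄,…,x₁₀₃` by `3,…,102`; the only nonzero entries are `Q(x₂,x₁) = 1` and, for each
`i` with `3 ≤ i`, `Q(x_i,x₃) = 2⁻ᵘ` and `Q(x_i,x₂) = 1 - 2⁻ᵘ`. -/
noncomputable def Qmu (μ : ℕ) : Matrix (Fin 103) (Fin 103) ℝ := fun i j =>
  if i = 1 ∧ j = 0 then 1
  else if 3 ≤ (i : ℕ) ∧ j = 2 then (1 / 2 : ℝ) ^ μ
  else if 3 ≤ (i : ℕ) ∧ j = 1 then 1 - (1 / 2 : ℝ) ^ μ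
  else 0

theorem Matrix.det_one_sub_eq_one_of_strictLowerTriangular {n R : Type*}
    [Fintype n] [DecidableEq n] [LinearOrder n] [CommRing R] (Q : Matrix n n R)
    (hQ : ∀ i j, i ≤ j → Q i j = 0) :
    (1 - Q).det = 1 := by
  rw [det_of_isLowerTriangular]
  · simp [hQ _ _ le_rfl]
  · intro i j (hij : i < j)
    simp [hQ i j hij.le, one_apply_ne hij.ne]

lemma Qmu_eq_zero_of_le (μ : ℕ) {i j : Fin 103} (hij : i ≤ j) : Qmu μ i j = 0 := by
  rw [Fin.le_def] at hij
  simp only [Qmu, Fin.ext_iff, Fin.val_zero, Fin.val_one, Fin.val_two]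
  rw [if_neg (by omega), if_neg (by omega), if_neg (by omega)]

lemma det_one_sub_Qmu (μ : ℕ) : (1 - Qmu μ).det = 1 :=
  det_one_sub_eq_one_of_strictLowerTriangular _ fun _ _ => Qmu_eq_zero_of_le μ

lemma Qmu_mulVec (μ : ℕ) (v : Fin 103 → ℝ) :
    Qmu μ *ᵥ v = fun i : Fin 103 => if i = 1 then v 0
      else if 3 ≤ (i : ℕ) then (1 / 2 : ℝ) ^ μ * v 2 + (1 - (1 / 2 : ℝ) ^ μ) * v 1 else 0 := by
  ext i
  simp only [mulVec, dotProduct, Qmu]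
  by_cases h1 : i = 1
  · subst h1; simp
  by_cases h3 : 3 ≤ (i : ℕ)
  · simp only [h1, h3, false_and, true_and, if_false, ite_mul, zero_mul]
    rw [Fintype.sum_eq_add 2 1 (by decide)]
    · simp
    · rintro j ⟨hj2, hj1⟩
      simp [hj2, hj1]
  · simp [h1, h3]

noncomputable def absorptionTime (t : ℝ) : Fin 103 → ℝ := fun i =>
  if i = 1 then 2 else if 3 ≤ (i : ℕ) then 3 - t else 1

lemma one_sub_Qmu_mulVec_absorptionTime (μ : ℕ) :
    (1 - Qmu μ) *ᵥ absorptionTime ((1 / 2 : ℝ) ^ μ) = fun _ => 1 := by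
  ext i
  rw [sub_mulVec, one_mulVec, Qmu_mulVec]
  by_cases h1 : i = 1
  · subst h1; norm_num [absorptionTime]
  by_cases h3 : 3 ≤ (i : ℕ)
  · simp [absorptionTime, h1, h3]; ring
  · simp [absorptionTime, h1, h3]

lemma sum_absorptionTime (t : ℝ) : ∑ i, absorptionTime t i = 304 - 100 * t := by
  change ∑ i : Fin (3 + 100), absorptionTime t i = _
  have hlast : ∀ i : Fin 100, absorptionTime t (Fin.natAdd 3 i) = 3 - t := fun i => by
    simp [absorptionTime, Fin.ext_iff]; omega
  rw [Fin.sum_univ_add, Fin.sum_univ_three]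
  simp only [hlast]
  simp [absorptionTime]
  ring

theorem stmt_14_general (μ : ℕ) :
    IsUnit (1 - Qmu μ) ∧
    (∑ X, ((1 - Qmu μ)⁻¹ *ᵥ (fun _ => 1)) X) / 103 =
      (304 - 100 * (1 / 2 : ℝ) ^ μ) / 103 ∧
    (∀ ν : ℕ, μ < ν →
      (304 - 100 * (1 / 2 : ℝ) ^ μ) / 103 < (304 - 100 * (1 / 2 : ℝ) ^ ν) / 103) ∧
    (304 - 100 * (1 / 2 : ℝ) ^ (1 : ℕ)) / 103 = 254 / 103 ∧
    (2 ≤ μ → (254 : ℝ) / (304 - 100 * (1 / 2 : ℝ) ^ μ) < 1) := by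
  have hdet : IsUnit (1 - Qmu μ).det := by rw [det_one_sub_Qmu]; exact isUnit_one
  refine ⟨(isUnit_iff_isUnit_det _).2 hdet, ?_, fun ν hν => ?_, by norm_num, fun h2 => ?_⟩
  · have := (1 - Qmu μ).invertibleOfIsUnitDet hdet
    rw [inv_mulVec_eq_vec (one_sub_Qmu_mulVec_absorptionTime μ).symm, sum_absorptionTime]
  · linarith [pow_lt_pow_right_of_lt_one₀ (by norm_num : (0 : ℝ) < 1 / 2) (by norm_num) hν]
  · have hle : (1 / 2 : ℝ) ^ μ ≤ (1 / 2) ^ 2 :=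
      pow_le_pow_of_le_one (by norm_num) (by norm_num) h2
    rw [div_lt_one (by linarith)]
    linarith

/-- for `μ ≥ 1`, `I - Q_μ` is invertible and the average over the `103`
transient states of the expected absorption times `m = (I - Q_μ)⁻¹ · 𝟙` equals
`(304 - 100·2⁻ᵘ)/103`; this quantity is strictly increasing in `μ`, equals `254/103`
at `μ = 1`, and so the a-scalability `254/(304 - 100·2⁻ᵘ)` is `< 1` for `μ ≥ 2`. -/
theorem stmt_14 (μ : ℕ) (hμ : 1 ≤ μ) :
    IsUnit (1 - Qmu μ) ∧
    (∑ X, ((1 - Qmu μ)⁻¹ *ᵥ (fun _ => 1)) X) / 103 =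
      (304 - 100 * (1 / 2 : ℝ) ^ μ) / 103 ∧
    (∀ ν : ℕ, μ < ν →
      (304 - 100 * (1 / 2 : ℝ) ^ μ) / 103 < (304 - 100 * (1 / 2 : ℝ) ^ ν) / 103) ∧
    (304 - 100 * (1 / 2 : ℝ) ^ (1 : ℕ)) / 103 = 254 / 103 ∧
    (2 ≤ μ → (254 : ℝ) / (304 - 100 * (1 / 2 : ℝ) ^ μ) < 1) :=
  stmt_14_general μ
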